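/- arXiv:2601.20651 — 3 statements merged into one kernel-verified Lean document; each statement's English description precedes it below -/
import Mathlib

section
/- For p > 1, a > 0, λ > 0 and v₀ > v₀* = sqrt(λ(p−1)/(p+1))·(λ/a)^{1/(p−1)}, the improper integral ∫₀^∞ ds / sqrt(v₀² − λs² + (2a/(p+1))s^{p+1}) is finite. -/
open Real MeasureTheory Filter Asymptotics Set

/-!
By Young's inequality, `l s² ≤ (2a/(p+1)) s^{p+1} + (v₀*)²` for `s ≥ 0`, so for `v₀ > v₀*` the
radicand is bounded below by `v₀² - (v₀*)² > 0` on `[0, ∞)` and the integrand is continuous there.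
At infinity the radicand dominates `(a/(p+1)) s^{p+1}`, so the integrand is `O(s^{-(p+1)/2})`,
which is integrable near `∞` because `(p+1)/2 > 1`.
-/

theorem eventually_mul_sq_le_rpow {r : ℝ} (hr : 2 < r) (k : ℝ) :
    ∀ᶠ s : ℝ in atTop, k * s ^ 2 ≤ s ^ r := by
  filter_upwards [(tendsto_rpow_atTop (sub_pos.2 hr)).eventually_ge_atTop k, eventually_gt_atTop 0]
    with s hks hs
  calc k * s ^ 2 ≤ s ^ (r - 2) * s ^ 2 := by gcongr
    _ = s ^ r := by rw [← rpow_add_natCast hs.ne']; norm_num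

theorem one_div_sqrt_mul_rpow {c s : ℝ} (hc : 0 < c) (hs : 0 ≤ s) (r : ℝ) :
    1 / √(c * s ^ r) = (√c)⁻¹ * s ^ (-r / 2) := by
  rw [sqrt_mul hc.le, sqrt_eq_rpow (s ^ r), ← rpow_mul hs, one_div, mul_inv, ← rpow_neg hs]
  ring_nf

theorem integrableOn_Ioi_one_div_sqrt_of_rpow_le {Q : ℝ → ℝ} {c r : ℝ} (hc : 0 < c) (hr : 2 < r)
    (hQc : ContinuousOn Q (Ici 0)) (hQpos : ∀ s, 0 ≤ s → 0 < Q s)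
    (hQr : ∀ᶠ s in atTop, c * s ^ r ≤ Q s) :
    IntegrableOn (fun s => 1 / √(Q s)) (Ioi 0) := by
  have hloc : LocallyIntegrableOn (fun s => 1 / √(Q s)) (Ici 0) :=
    (continuousOn_const.div (continuous_sqrt.comp_continuousOn hQc) fun s hs =>
      (sqrt_pos.2 (hQpos s hs)).ne').locallyIntegrableOn measurableSet_Ici
  have hO : (fun s => 1 / √(Q s)) =O[atTop] fun s => s ^ (-r / 2) := by
    refine IsBigO.of_bound (√c)⁻¹ ?_
    filter_upwards [hQr, eventually_gt_atTop 0] with s hQs hs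
    have hcs : 0 < c * s ^ r := by positivity
    rw [norm_of_nonneg (by positivity), norm_of_nonneg (by positivity),
      ← one_div_sqrt_mul_rpow hc hs.le]
    gcongr
  have hg : IntegrableAtFilter (fun s : ℝ => s ^ (-r / 2)) atTop :=
    ⟨Ioi 1, Ioi_mem_atTop 1, (integrableOn_Ioi_rpow_iff one_pos).2 (by linarith)⟩
  exact (hloc.integrableOn_of_isBigO_atTop hO hg).mono_set Ioi_subset_Ici_self

theorem sq_le_two_div_mul_rpow_add {q u : ℝ} (hq : 2 ≤ q) (hu : 0 ≤ u) :
    u ^ 2 ≤ 2 / q * u ^ q + (q - 2) / q := by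
  have hq0 : 0 < q := by linarith
  have h := geom_mean_le_arith_mean2_weighted (w₁ := 2 / q) (w₂ := (q - 2) / q) (p₁ := u ^ q)
    (p₂ := 1) (by positivity) (div_nonneg (sub_nonneg.2 hq) hq0.le) (by positivity) zero_le_one
    (by field_simp; ring)
  rwa [one_rpow, mul_one, mul_one, ← rpow_mul hu, mul_div_cancel₀ _ hq0.ne', rpow_two] at h

/-- The substitution `s = μ u` with `μ = (l / a) ^ (1 / (p - 1))` reduces this to
`sq_le_two_div_mul_rpow_add`. -/
theorem mul_sq_le_rpow_add {p a l s : ℝ} (hp : 1 < p) (ha : 0 < a) (hl : 0 < l) (hs : 0 ≤ s) :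
    l * s ^ 2 ≤ 2 * a / (p + 1) * s ^ (p + 1) +
      (√(l * (p - 1) / (p + 1)) * (l / a) ^ (1 / (p - 1))) ^ 2 := by
  set μ := (l / a) ^ (1 / (p - 1)) with hμ
  have hp1 : 0 < p - 1 := by linarith
  have hμ0 : 0 < μ := by positivity
  have hμp : a * μ ^ (p - 1) = l := by
    rw [hμ, ← rpow_mul (by positivity), one_div_mul_cancel hp1.ne', rpow_one]
    field_simp
  have hu := sq_le_two_div_mul_rpow_add (q := p + 1) (by linarith) (div_nonneg hs hμ0.le)
  have hrad : s ^ (p + 1) = μ ^ (p - 1) * μ ^ 2 * (s / μ) ^ (p + 1) := by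
    conv_lhs => rw [show s = μ * (s / μ) by field_simp]
    rw [mul_rpow hμ0.le (div_nonneg hs hμ0.le), ← rpow_add_natCast hμ0.ne']
    ring_nf
  rw [mul_pow, sq_sqrt (by positivity), hrad]
  calc l * s ^ 2 = l * μ ^ 2 * (s / μ) ^ 2 := by field_simp
    _ ≤ l * μ ^ 2 * (2 / (p + 1) * (s / μ) ^ (p + 1) + (p + 1 - 2) / (p + 1)) := by gcongr
    _ = _ := by rw [← hμp]; ring

/-- For `p > 1`, `a > 0`, `λ > 0` and `v₀ > v₀*`, the improper integral
`∫₀^∞ ds / sqrt(v₀² − λs² + (2a/(p+1))s^{p+1})` is finite. -/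
theorem stmt5 (p a l v₀ : ℝ) (hp : 1 < p) (ha : 0 < a) (hl : 0 < l)
    (hv₀ : Real.sqrt (l * (p - 1) / (p + 1)) * (l / a) ^ (1 / (p - 1)) < v₀) :
    IntegrableOn
      (fun s : ℝ => 1 / Real.sqrt (v₀ ^ 2 - l * s ^ 2 + (2 * a / (p + 1)) * s ^ (p + 1)))
      (Set.Ioi 0) := by
  have hp1 : 0 < p + 1 := by linarith
  refine integrableOn_Ioi_one_div_sqrt_of_rpow_le (c := a / (p + 1)) (r := p + 1)
    (by positivity) (by linarith) ?_ (fun s hs => ?_) ?_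
  · have := continuous_rpow_const (q := p + 1) hp1.le
    exact Continuous.continuousOn (by fun_prop)
  · have hv₀sq := pow_lt_pow_left₀ hv₀ (by positivity) two_ne_zero
    linarith [mul_sq_le_rpow_add hp ha hl hs]
  · filter_upwards [eventually_mul_sq_le_rpow (by linarith : 2 < p + 1) (l * (p + 1) / a)]
      with s hs
    have hls : l * s ^ 2 ≤ a / (p + 1) * s ^ (p + 1) :=
      calc l * s ^ 2 = a / (p + 1) * (l * (p + 1) / a * s ^ 2) := by field_simp
        _ ≤ a / (p + 1) * s ^ (p + 1) := by gcongr
    have hsplit : 2 * a / (p + 1) * s ^ (p + 1) = 2 * (a / (p + 1) * s ^ (p + 1)) := by ring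
    linarith [sq_nonneg v₀]
end

section
/- For p > 1, a > 0, λ ≤ 0, T_D(v₀) = ∫₀^∞ ds / sqrt(v₀² − λs² + (2a/(p+1))s^{p+1}) tends to 0 as v₀ → +∞. -/
/-!
Dominated convergence: for `v₀ ≥ 1` and `λ ≤ 0` the integrand is bounded by
`1 / √(1 + c s^(p+1))` with `c = 2a/(p+1) > 0`, which is integrable on `(0, ∞)` since it is
at most `1` near `0` and decays like `s^(-(p+1)/2)` with `(p+1)/2 > 1`; and for each fixed `s`
the integrand tends to `0` as `v₀ → ∞`.
-/

open Real MeasureTheory Filter Set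

theorem tendsto_one_div_sqrt_atTop_zero {α : Type*} {l : Filter α} {f : α → ℝ}
    (hf : Tendsto f l atTop) : Tendsto (fun x => 1 / √(f x)) l (nhds 0) := by
  simp only [one_div]
  exact (tendsto_sqrt_atTop.comp hf).inv_tendsto_atTop

theorem one_div_sqrt_one_add_mul_rpow_le_one {c q s : ℝ} (hc : 0 ≤ c) (hs : 0 ≤ s) :
    1 / √(1 + c * s ^ q) ≤ 1 := by
  have : 0 ≤ c * s ^ q := by positivity
  rw [div_le_one (by positivity), one_le_sqrt]
  linarith

theorem one_div_sqrt_one_add_mul_rpow_le {c q s : ℝ} (hc : 0 < c) (hs : 0 < s) :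
    1 / √(1 + c * s ^ q) ≤ (√c)⁻¹ * s ^ (-(q / 2)) := by
  have hsqrt : √(c * s ^ q) = √c * s ^ (q / 2) := by
    rw [sqrt_mul hc.le, sqrt_eq_rpow (s ^ q), ← rpow_mul hs.le, mul_one_div]
  calc 1 / √(1 + c * s ^ q) ≤ 1 / √(c * s ^ q) :=
        one_div_le_one_div_of_le (by positivity) (sqrt_le_sqrt (by linarith))
    _ = (√c)⁻¹ * s ^ (-(q / 2)) := by rw [hsqrt, rpow_neg hs.le, one_div, mul_inv]

theorem integrableOn_Ioi_one_div_sqrt_one_add_mul_rpow {c q : ℝ} (hc : 0 < c) (hq : 2 < q) :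
    IntegrableOn (fun s => 1 / √(1 + c * s ^ q)) (Ioi 0) := by
  have hmeas : AEStronglyMeasurable (fun s : ℝ => 1 / √(1 + c * s ^ q)) :=
    (by fun_prop : Measurable _).aestronglyMeasurable
  rw [← Ioc_union_Ioi_eq_Ioi zero_le_one]
  refine IntegrableOn.union ?_ ?_
  · refine Measure.integrableOn_of_bounded (M := 1) (by simp) hmeas ?_
    filter_upwards [ae_restrict_mem measurableSet_Ioc] with s hs
    rw [norm_of_nonneg (by positivity)]
    exact one_div_sqrt_one_add_mul_rpow_le_one hc.le hs.1.le
  · have hdecay := integrableOn_Ioi_rpow_of_lt (by linarith : -(q / 2) < -1) one_pos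
    refine (hdecay.const_mul (√c)⁻¹).mono' hmeas.restrict ?_
    filter_upwards [ae_restrict_mem measurableSet_Ioi] with s hs
    rw [norm_of_nonneg (by positivity)]
    exact one_div_sqrt_one_add_mul_rpow_le hc (one_pos.trans hs)

/-- For `p > 1`, `a > 0`, `λ ≤ 0`, the blow-up time
`T_D(v₀) = ∫₀^∞ ds / sqrt(v₀² − λs² + (2a/(p+1))s^{p+1})` tends to `0`
as `v₀ → +∞`. -/
theorem stmt7 (p a l : ℝ) (hp : 1 < p) (ha : 0 < a) (hl : l ≤ 0) :
    Tendsto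
      (fun v₀ : ℝ => ∫ s in Set.Ioi (0 : ℝ),
        1 / Real.sqrt (v₀ ^ 2 - l * s ^ 2 + (2 * a / (p + 1)) * s ^ (p + 1)))
      atTop (nhds 0) := by
  set c := 2 * a / (p + 1)
  have hc : 0 < c := div_pos (by positivity) (by linarith)
  have hmeas : ∀ v₀ : ℝ, AEStronglyMeasurable
      (fun s => 1 / √(v₀ ^ 2 - l * s ^ 2 + c * s ^ (p + 1))) (volume.restrict (Ioi 0)) :=
    fun v₀ => (by fun_prop : Measurable _).aestronglyMeasurable
  have hbound : ∀ᶠ v₀ : ℝ in atTop, ∀ᵐ s ∂volume.restrict (Ioi 0),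
      ‖1 / √(v₀ ^ 2 - l * s ^ 2 + c * s ^ (p + 1))‖ ≤ 1 / √(1 + c * s ^ (p + 1)) := by
    filter_upwards [eventually_ge_atTop 1] with v₀ hv₀
    filter_upwards [ae_restrict_mem measurableSet_Ioi] with s (hs : 0 < s)
    have : 0 ≤ c * s ^ (p + 1) := by positivity
    rw [norm_of_nonneg (by positivity)]
    exact one_div_le_one_div_of_le (by positivity) (sqrt_le_sqrt (by nlinarith))
  have hlim : ∀ s : ℝ, Tendsto (fun v₀ : ℝ => 1 / √(v₀ ^ 2 - l * s ^ 2 + c * s ^ (p + 1)))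
      atTop (nhds 0) := fun s =>
    tendsto_one_div_sqrt_atTop_zero <| tendsto_atTop_add_const_right _ _ <| by
      simpa only [sub_eq_add_neg] using
        tendsto_atTop_add_const_right _ _ (tendsto_pow_atTop two_ne_zero)
  simpa using tendsto_integral_filter_of_dominated_convergence _ (.of_forall hmeas) hbound
    (integrableOn_Ioi_one_div_sqrt_one_add_mul_rpow hc (by linarith)) (.of_forall hlim)
end

section
/- For p > 1, a > 0, λ > 0 and u₀ > u₀* = (λ/a)^{1/(p−1)}, the improper integral T_N(u₀) = ∫₁^∞ dθ / sqrt((2a/(p+1))u₀^{p−1}(θ^{p+1} − 1) − λ(θ² − 1)) is finite, and the integrand's denominator is positive for all θ > 1. -/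
open Real MeasureTheory Set

/-! Bernoulli's inequality `θ ^ (p + 1) - 1 ≥ (p + 1) / 2 * (θ ^ 2 - 1)` bounds the denominator
below by `δ * (θ ^ (p + 1) - 1)` with `δ = 2 / (p + 1) * (a * u₀ ^ (p - 1) - λ)`, and `δ > 0` is
exactly the condition `u₀ > u₀*`. So the integrand is at most `δ ^ (-1/2) / √(θ ^ (p + 1) - 1)`,
which is integrable on `(1, ∞)` because it behaves like `(θ - 1) ^ (-1/2)` near `1` and like
`θ ^ (-(p + 1) / 2)` at infinity, with `(p + 1) / 2 > 1`. -/

lemma mul_sq_sub_one_le_rpow_sub_one {q θ : ℝ} (hq : 2 ≤ q) (hθ : 0 ≤ θ) :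
    q / 2 * (θ ^ 2 - 1) ≤ θ ^ q - 1 := by
  have bernoulli := one_add_mul_self_le_rpow_one_add (s := θ ^ 2 - 1) (p := q / 2)
    (by nlinarith [sq_nonneg θ]) (by linarith)
  have hpow : (1 + (θ ^ 2 - 1)) ^ (q / 2) = θ ^ q := by
    rw [add_sub_cancel, ← rpow_natCast, ← rpow_mul hθ]
    norm_num [mul_div_cancel₀]
  linarith

lemma sub_mul_rpow_sub_one_le {q c l θ : ℝ} (hq : 2 ≤ q) (hl : 0 ≤ l) (hθ : 0 ≤ θ) :
    (c - 2 * l / q) * (θ ^ q - 1) ≤ c * (θ ^ q - 1) - l * (θ ^ 2 - 1) := by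
  have h := mul_le_mul_of_nonneg_left (mul_sq_sub_one_le_rpow_sub_one hq hθ)
    (by positivity : 0 ≤ 2 * l / q)
  have : 2 * l / q * (q / 2 * (θ ^ 2 - 1)) = l * (θ ^ 2 - 1) := by
    field_simp
  linarith

lemma one_div_sqrt_le_of_mul_le {δ x y : ℝ} (hδ : 0 < δ) (hx : 0 < x) (h : δ * x ≤ y) :
    1 / √y ≤ (√δ)⁻¹ * (1 / √x) := by
  rw [one_div (√x), ← mul_inv, ← sqrt_mul hδ.le, ← one_div]
  exact one_div_le_one_div_of_le (sqrt_pos.2 (by positivity)) (sqrt_le_sqrt h)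

lemma one_div_sqrt_eq_rpow {x : ℝ} (hx : 0 ≤ x) : 1 / √x = x ^ (-(1 / 2) : ℝ) := by
  rw [sqrt_eq_rpow, rpow_neg hx, one_div (x ^ _)]

lemma integrableOn_Ioc_one_two_one_div_sqrt_rpow_sub_one {q : ℝ} (hq : 1 ≤ q) :
    IntegrableOn (fun θ : ℝ => 1 / √(θ ^ q - 1)) (Ioc 1 2) := by
  have hsing : IntegrableOn (fun θ : ℝ => (θ - 1) ^ (-(1 / 2) : ℝ)) (Ioc 1 2) := by
    have := (intervalIntegral.intervalIntegrable_rpow' (r := -(1 / 2)) (a := 0) (b := 1)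
      (by norm_num)).comp_sub_right 1
    simp only [zero_add, one_add_one_eq_two] at this
    exact this.1
  refine (hsing.const_mul (√1)⁻¹).mono' (by fun_prop : Measurable _).aestronglyMeasurable ?_
  filter_upwards [self_mem_ae_restrict measurableSet_Ioc] with θ hθ
  rw [norm_of_nonneg (by positivity), ← one_div_sqrt_eq_rpow (by linarith [hθ.1])]
  exact one_div_sqrt_le_of_mul_le one_pos (by linarith [hθ.1])
    (by linarith [self_le_rpow_of_one_le hθ.1.le hq])

lemma integrableOn_Ioi_two_one_div_sqrt_rpow_sub_one {q : ℝ} (hq : 2 < q) :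
    IntegrableOn (fun θ : ℝ => 1 / √(θ ^ q - 1)) (Ioi 2) := by
  have hdecay : IntegrableOn (fun θ : ℝ => θ ^ (-(q / 2))) (Ioi 2) :=
    integrableOn_Ioi_rpow_of_lt (by linarith) (by norm_num)
  refine (hdecay.const_mul (√(1 / 2))⁻¹).mono'
    (by fun_prop : Measurable _).aestronglyMeasurable ?_
  filter_upwards [self_mem_ae_restrict measurableSet_Ioi] with θ (hθ : 2 < θ)
  have hθq : θ ≤ θ ^ q := self_le_rpow_of_one_le (by linarith) (by linarith)
  have : θ ^ (-(q / 2)) = 1 / √(θ ^ q) := by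
    rw [one_div_sqrt_eq_rpow (by positivity), ← rpow_mul (by linarith)]
    ring_nf
  rw [norm_of_nonneg (by positivity), this]
  exact one_div_sqrt_le_of_mul_le (by norm_num) (by positivity) (by linarith)

lemma integrableOn_Ioi_one_one_div_sqrt_rpow_sub_one {q : ℝ} (hq : 2 < q) :
    IntegrableOn (fun θ : ℝ => 1 / √(θ ^ q - 1)) (Ioi 1) := by
  rw [← Ioc_union_Ioi_eq_Ioi one_le_two]
  exact (integrableOn_Ioc_one_two_one_div_sqrt_rpow_sub_one (by linarith)).union
    (integrableOn_Ioi_two_one_div_sqrt_rpow_sub_one hq)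

/-- For `p > 1`, `a > 0`, `λ > 0` and `u₀ > u₀* = (λ/a)^{1/(p−1)}`, the denominator
`(2a/(p+1))u₀^{p−1}(θ^{p+1} − 1) − λ(θ² − 1)` is positive for `θ > 1` and the
integral `∫₁^∞ dθ / sqrt(...)` is finite. -/
theorem stmt8 (p a l u₀ : ℝ) (hp : 1 < p) (ha : 0 < a) (hl : 0 < l)
    (hu₀ : (l / a) ^ (1 / (p - 1)) < u₀) :
    (∀ θ : ℝ, 1 < θ →
      0 < (2 * a / (p + 1)) * u₀ ^ (p - 1) * (θ ^ (p + 1) - 1) - l * (θ ^ 2 - 1)) ∧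
    IntegrableOn
      (fun θ : ℝ => 1 / Real.sqrt
        ((2 * a / (p + 1)) * u₀ ^ (p - 1) * (θ ^ (p + 1) - 1) - l * (θ ^ 2 - 1)))
      (Set.Ioi 1) := by
  have hu₀pos : 0 < u₀ := (rpow_pos_of_pos (div_pos hl ha) _).trans hu₀
  have hsuper : l < a * u₀ ^ (p - 1) := by
    rw [one_div, rpow_inv_lt_iff_of_pos (div_pos hl ha).le hu₀pos.le (by linarith),
      div_lt_iff₀ ha] at hu₀
    linarith
  set δ := 2 * a / (p + 1) * u₀ ^ (p - 1) - 2 * l / (p + 1)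
  have hδ : 0 < δ := by
    have : δ = 2 / (p + 1) * (a * u₀ ^ (p - 1) - l) := by ring
    rw [this]
    exact mul_pos (by positivity) (by linarith)
  have hlower (θ : ℝ) (hθ : 1 ≤ θ) :
      δ * (θ ^ (p + 1) - 1) ≤
        (2 * a / (p + 1)) * u₀ ^ (p - 1) * (θ ^ (p + 1) - 1) - l * (θ ^ 2 - 1) :=
    sub_mul_rpow_sub_one_le (by linarith) hl.le (by linarith)
  have hpos (θ : ℝ) (hθ : 1 < θ) : 0 < θ ^ (p + 1) - 1 :=
    sub_pos.2 (one_lt_rpow hθ (by linarith))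
  refine ⟨fun θ hθ => (mul_pos hδ (hpos θ hθ)).trans_le (hlower θ hθ.le), ?_⟩
  refine ((integrableOn_Ioi_one_one_div_sqrt_rpow_sub_one (q := p + 1) (by linarith)).const_mul
    (√δ)⁻¹).mono' (by fun_prop : Measurable _).aestronglyMeasurable ?_
  filter_upwards [self_mem_ae_restrict measurableSet_Ioi] with θ (hθ : 1 < θ)
  rw [norm_of_nonneg (by positivity)]
  exact one_div_sqrt_le_of_mul_le hδ (hpos θ hθ) (hlower θ hθ.le)
end
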